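/- arXiv:math/0312212 — 4 statements merged into one kernel-verified Lean document; each statement's English description precedes it below -/
import Mathlib

section
/- Let S_0 f(z) = (1/√2)(1+z) f(z²) and S_1 f(z) = (1/√2)(1−z) f(z²) on L²(𝕋). Then S_0 and S_1 satisfy the Cuntz relations S_i* S_j = δ_{ij} I and S_0 S_0* + S_1 S_1* = I, and S_j* e_0 = (1/√2) e_0 for j = 0, 1. -/
/-!
In the Fourier basis the operators act by `S j e_n = ∑ k, A j k • e_(2n+k)` with the normalized
Hadamard matrix `A = 2^(-1/2) [[1, 1], [1, -1]]`. For any family of operators refining an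
orthonormal basis `(e_n)_(n ∈ ℤ)` in this way through an `N × N` matrix `A`, one computes
`(S j)† e_(Nn+k) = conj (A j k) • e_n`; on basis vectors, `(S i)† S j = δ i j` then becomes
`A Aᴴ = 1` and `∑ j, S j (S j)† = 1` becomes `Aᴴ A = 1`. Both hold because `A` is unitary, and
`(S j)† e_0 = conj (A j 0) • e_0 = 2^(-1/2) • e_0`.
-/

open MeasureTheory ContinuousLinearMap AddCircle

instance : Fact (0 < (1:ℝ)) := ⟨one_pos⟩

open scoped InnerProductSpace ComplexConjugate

namespace HilbertBasis

variable {ι 𝕜 E : Type*} [RCLike 𝕜] [NormedAddCommGroup E] [InnerProductSpace 𝕜 E]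

theorem ext_inner (b : HilbertBasis ι 𝕜 E) {x y : E} (h : ∀ i, ⟪b i, x⟫_𝕜 = ⟪b i, y⟫_𝕜) :
    x = y :=
  b.repr.injective <| lp.ext <| funext fun i => by simp only [b.repr_apply_apply, h]

theorem ext_continuousLinearMap {F : Type*} [AddCommMonoid F] [Module 𝕜 F] [TopologicalSpace F]
    [T2Space F] (b : HilbertBasis ι 𝕜 E) {f g : E →L[𝕜] F} (h : ∀ i, f (b i) = g (b i)) :
    f = g :=
  ext_on (Submodule.dense_iff_topologicalClosure_eq_top.2 b.dense_span) (Set.forall_mem_range.2 h)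

end HilbertBasis

theorem Int.mul_add_fin_inj {N : ℕ} [NeZero N] {m n : ℤ} {l k : Fin N} :
    m * N + l = n * N + k ↔ m = n ∧ l = k :=
  (Int.divModEquiv N).symm.injective.eq_iff.trans Prod.mk_inj

section Refinement

variable {𝕜 E : Type*} [RCLike 𝕜] [NormedAddCommGroup E] [InnerProductSpace 𝕜 E] [CompleteSpace E]
  (b : HilbertBasis ℤ 𝕜 E) {N : ℕ} [NeZero N]

theorem adjoint_apply_mul_add {T : E →L[𝕜] E} {a : Fin N → 𝕜}
    (hT : ∀ n, T (b n) = ∑ k, a k • b (n * N + k)) (n : ℤ) (k : Fin N) :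
    adjoint T (b (n * N + k)) = conj (a k) • b n := by
  refine b.ext_inner fun m => ?_
  simp only [adjoint_inner_right, hT, sum_inner, inner_smul_left, inner_smul_right,
    orthonormal_iff_ite.mp b.orthonormal, Int.mul_add_fin_inj]
  by_cases hmn : m = n <;> simp [hmn]

theorem adjoint_comp_eq_ite_of_mem_unitaryGroup {T : Fin N → E →L[𝕜] E}
    {A : Matrix (Fin N) (Fin N) 𝕜} (hA : A ∈ Matrix.unitaryGroup (Fin N) 𝕜)
    (hT : ∀ j n, T j (b n) = ∑ k, A j k • b (n * N + k)) (i j : Fin N) :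
    adjoint (T i) ∘L T j = if i = j then 1 else 0 := by
  refine b.ext_continuousLinearMap fun n => ?_
  have hA_ji : ∑ k, A j k * conj (A i k) = if i = j then 1 else 0 := by
    simpa [Matrix.mul_apply, Matrix.one_apply, eq_comm] using
      congrFun (congrFun (Matrix.mem_unitaryGroup_iff.mp hA) j) i
  simp only [comp_apply, hT j, map_sum, map_smul, adjoint_apply_mul_add b (hT i), smul_smul,
    ← Finset.sum_smul, hA_ji]
  split_ifs <;> simp

theorem sum_comp_adjoint_eq_one_of_mem_unitaryGroup {T : Fin N → E →L[𝕜] E}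
    {A : Matrix (Fin N) (Fin N) 𝕜} (hA : A ∈ Matrix.unitaryGroup (Fin N) 𝕜)
    (hT : ∀ j n, T j (b n) = ∑ k, A j k • b (n * N + k)) :
    ∑ j, T j ∘L adjoint (T j) = 1 := by
  refine b.ext_continuousLinearMap fun m => ?_
  obtain ⟨⟨n, k⟩, rfl⟩ := (Int.divModEquiv N).symm.surjective m
  have hA_k (l : Fin N) : ∑ j, conj (A j k) * A j l = if k = l then 1 else 0 := by
    simpa [Matrix.mul_apply, Matrix.one_apply] using
      congrFun (congrFun (Matrix.mem_unitaryGroup_iff'.mp hA) k) l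
  simp only [Int.divModEquiv_symm_apply, sum_apply, comp_apply, adjoint_apply_mul_add b (hT _),
    map_smul, hT, Finset.smul_sum, smul_smul, one_apply_eq_self]
  rw [Finset.sum_comm]
  simp only [← Finset.sum_smul, hA_k, ite_smul, one_smul, zero_smul, Finset.sum_ite_eq,
    Finset.mem_univ, if_true]

end Refinement

section Fourier

variable {T : ℝ}

theorem fourier_nsmul (N : ℕ) (n : ℤ) (x : AddCircle T) :
    fourier n (N • x) = fourier (n * N) x := by
  rw [fourier_apply, fourier_apply, ← natCast_zsmul, smul_smul]

variable [Fact (0 < T)]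

theorem measurePreserving_nsmul_haarAddCircle {N : ℕ} (hN : N ≠ 0) :
    MeasurePreserving (fun x : AddCircle T => N • x) haarAddCircle haarAddCircle := by
  simpa only [natCast_zsmul] using
    Measure.measurePreserving_zsmul haarAddCircle (Int.natCast_ne_zero.2 hN)

theorem apply_fourierLp_of_ae_eq_mul_comp_nsmul {N : ℕ} [NeZero N]
    {S : Lp ℂ 2 (@haarAddCircle T _) →L[ℂ] Lp ℂ 2 (@haarAddCircle T _)} {a : Fin N → ℂ}
    (hS : ∀ f : Lp ℂ 2 (@haarAddCircle T _), (S f : AddCircle T → ℂ) =ᵐ[haarAddCircle]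
      fun x => (∑ k, a k * fourier k x) * f (N • x)) (n : ℤ) :
    S (fourierLp 2 n) = ∑ k, a k • fourierLp 2 (n * N + k) := by
  apply Lp.ext
  have hcomp : (fun x => fourierLp (T := T) 2 n (N • x)) =ᵐ[haarAddCircle]
      fun x => fourier n (N • x) :=
    (measurePreserving_nsmul_haarAddCircle (NeZero.ne N)).quasiMeasurePreserving.ae_eq_comp
      (coeFn_fourierLp 2 n)
  have hterm (k : Fin N) : (a k • fourierLp 2 (n * N + k) : Lp ℂ 2 (@haarAddCircle T _))
      =ᵐ[haarAddCircle] fun x => a k * fourier (n * N + k) x := by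
    filter_upwards [Lp.coeFn_smul (a k) (fourierLp 2 (n * N + k)),
      coeFn_fourierLp (T := T) 2 (n * N + k)] with x hsx hfx
    rw [hsx, Pi.smul_apply, hfx, smul_eq_mul]
  filter_upwards [hS _, hcomp, Lp.coeFn_fun_finsetSum Finset.univ
    fun k : Fin N => a k • fourierLp (T := T) 2 (n * N + k), ae_all_iff.2 hterm]
    with x hSx hcx hsx htx
  rw [hSx, hcx, hsx, fourier_nsmul, Finset.sum_mul]
  refine Finset.sum_congr rfl fun k _ => ?_
  rw [htx k, add_comm _ (k : ℤ), fourier_add]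
  ring

end Fourier

theorem hadamard_mem_unitaryGroup :
    ((Real.sqrt 2 : ℂ)⁻¹ • !![1, 1; 1, -1] : Matrix (Fin 2) (Fin 2) ℂ) ∈
      Matrix.unitaryGroup (Fin 2) ℂ := by
  have hc : (Real.sqrt 2 : ℂ)⁻¹ * (Real.sqrt 2 : ℂ)⁻¹ = 2⁻¹ := by
    rw [← mul_inv, ← Complex.ofReal_mul, Real.mul_self_sqrt zero_le_two]; norm_num
  rw [Matrix.mem_unitaryGroup_iff]
  ext i j
  fin_cases i <;> fin_cases j <;>
    simp [Matrix.mul_apply, Fin.sum_univ_two, Matrix.star_apply, Complex.conj_ofReal, hc] <;>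
    norm_num

theorem stmt5
    (S : Fin 2 →
      Lp ℂ 2 (haarAddCircle : Measure (AddCircle (1:ℝ))) →L[ℂ]
        Lp ℂ 2 (haarAddCircle : Measure (AddCircle (1:ℝ))))
    (hS0 : ∀ f : Lp ℂ 2 (haarAddCircle : Measure (AddCircle (1:ℝ))),
      (S 0 f : AddCircle (1:ℝ) → ℂ) =ᵐ[haarAddCircle]
        fun x => (Real.sqrt 2 : ℂ)⁻¹ * (1 + fourier 1 x) * f (2 • x))
    (hS1 : ∀ f : Lp ℂ 2 (haarAddCircle : Measure (AddCircle (1:ℝ))),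
      (S 1 f : AddCircle (1:ℝ) → ℂ) =ᵐ[haarAddCircle]
        fun x => (Real.sqrt 2 : ℂ)⁻¹ * (1 - fourier 1 x) * f (2 • x)) :
    (∀ i j : Fin 2,
      (adjoint (S i)) ∘L (S j) =
        if i = j then
          (1 : Lp ℂ 2 (haarAddCircle : Measure (AddCircle (1:ℝ))) →L[ℂ]
            Lp ℂ 2 (haarAddCircle : Measure (AddCircle (1:ℝ))))
        else 0) ∧
    (S 0) ∘L (adjoint (S 0)) + (S 1) ∘L (adjoint (S 1)) = 1 ∧
    (∀ j : Fin 2,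
      adjoint (S j) (fourierLp 2 0) = (Real.sqrt 2 : ℂ)⁻¹ • fourierLp 2 0) := by
  have hS_basis (j : Fin 2) (n : ℤ) : S j (fourierBasis n) =
      ∑ k, ((Real.sqrt 2 : ℂ)⁻¹ • !![1, 1; 1, -1] : Matrix (Fin 2) (Fin 2) ℂ) j k •
        fourierBasis (n * (2 : ℕ) + k) := by
    simp only [coe_fourierBasis]
    refine apply_fourierLp_of_ae_eq_mul_comp_nsmul (fun f => ?_) n
    fin_cases j <;> [refine (hS0 f).trans ?_; refine (hS1 f).trans ?_] <;>
      exact .of_forall fun x => by simp [Fin.sum_univ_two, -mul_eq_mul_right_iff]; ring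
  refine ⟨adjoint_comp_eq_ite_of_mem_unitaryGroup fourierBasis hadamard_mem_unitaryGroup hS_basis,
    ?_, fun j => ?_⟩
  · simpa [Fin.sum_univ_two] using
      sum_comp_adjoint_eq_one_of_mem_unitaryGroup fourierBasis hadamard_mem_unitaryGroup hS_basis
  · have h := adjoint_apply_mul_add fourierBasis (hS_basis j) 0 0
    fin_cases j <;> simpa [coe_fourierBasis, Complex.conj_ofReal] using h
end

section
/- Let N ≥ 2, let (S_j) be a representation of O_N on H, let P be a projection-valued Borel measure on [0,1) satisfying the covariance ∑_j S_j P(σ_j^{-1}(E)) S_j* = P(E) where σ_j(x) = (x+j)/N, and suppose f ∈ H is a unit vector with S_j* f = λ_j f for all j. Then the probability measure μ(E) = ‖P(E)f‖² satisfies μ = ∑_{j=0}^{N-1} |λ_j|² · (μ ∘ σ_j^{-1}). -/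
/-!
Apply the covariance relation to `f` and pair with `f`: since `S_j* f = λ_j f`, the `j`-th term
becomes `|λ_j|² ⟪f, P(σ_j⁻¹ E) f⟫`, and `⟪f, Q f⟫ = ‖Q f‖²` for every orthogonal projection `Q`.
-/

open ContinuousLinearMap MeasureTheory

/-- The map `x ↦ (x + j)/N` on `[0,1)`. -/
noncomputable def sigma01 {N : ℕ} (hN : 0 < N) (j : Fin N) (x : Set.Ico (0:ℝ) 1) :
    Set.Ico (0:ℝ) 1 :=
  ⟨((x : ℝ) + j) / N, by
    obtain ⟨hx0, hx1⟩ := x.2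
    have hN' : (0:ℝ) < N := by exact_mod_cast hN
    constructor
    · exact div_nonneg (add_nonneg hx0 (Nat.cast_nonneg _)) hN'.le
    · rw [div_lt_one hN']
      have hj : (j : ℝ) + 1 ≤ N := by exact_mod_cast j.2
      linarith⟩

lemma sigma01_measurable {N : ℕ} (hN : 0 < N) (j : Fin N) : Measurable (sigma01 hN j) :=
  (Continuous.subtype_mk ((continuous_subtype_val.add continuous_const).div_const _) _).measurable

section Projection

variable {𝕜 E : Type*} [RCLike 𝕜] [NormedAddCommGroup E] [InnerProductSpace 𝕜 E] [CompleteSpace E]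

lemma inner_apply_self_eq_norm_sq_of_projection {T : E →L[𝕜] E} (hadj : adjoint T = T)
    (hidem : T ∘L T = T) (x : E) : inner 𝕜 x (T x) = (‖T x‖ : 𝕜) ^ 2 :=
  calc inner 𝕜 x (T x) = inner 𝕜 x (T (T x)) := by rw [← comp_apply, hidem]
    _ = inner 𝕜 (adjoint T x) (T x) := (adjoint_inner_left ..).symm
    _ = (‖T x‖ : 𝕜) ^ 2 := by rw [hadj, inner_self_eq_norm_sq_to_K]

lemma inner_apply_comp_adjoint_of_eigenvector {S T : E →L[𝕜] E} {x : E} {c : 𝕜}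
    (hx : adjoint S x = c • x) :
    inner 𝕜 x (S (T (adjoint S x))) = (‖c‖ : 𝕜) ^ 2 * inner 𝕜 x (T x) := by
  rw [← adjoint_inner_left, hx, map_smul, inner_smul_left, inner_smul_right, ← mul_assoc,
    RCLike.conj_mul]

lemma norm_sq_apply_eq_sum_of_eq_sum_conj {ι : Type*} [Fintype ι] {P : E →L[𝕜] E}
    {S Q : ι → E →L[𝕜] E} (hP : adjoint P = P ∧ P ∘L P = P)
    (hQ : ∀ i, adjoint (Q i) = Q i ∧ Q i ∘L Q i = Q i)
    (hcov : ∑ i, S i ∘L Q i ∘L adjoint (S i) = P) {x : E} {c : ι → 𝕜}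
    (hx : ∀ i, adjoint (S i) x = c i • x) :
    ‖P x‖ ^ 2 = ∑ i, ‖c i‖ ^ 2 * ‖Q i x‖ ^ 2 := by
  have h : ((‖P x‖ ^ 2 : ℝ) : 𝕜) = ∑ i, (‖c i‖ : 𝕜) ^ 2 * (‖Q i x‖ : 𝕜) ^ 2 := by
    rw [RCLike.ofReal_pow, ← inner_apply_self_eq_norm_sq_of_projection hP.1 hP.2, ← hcov,
      sum_apply, inner_sum]
    refine Finset.sum_congr rfl fun i _ => ?_
    rw [comp_apply, comp_apply, inner_apply_comp_adjoint_of_eigenvector (hx i),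
      inner_apply_self_eq_norm_sq_of_projection (hQ i).1 (hQ i).2]
  exact_mod_cast h

end Projection

theorem stmt8_general {H : Type*} [NormedAddCommGroup H] [InnerProductSpace ℂ H] [CompleteSpace H]
    (N : ℕ) (hN0 : 0 < N) (S : Fin N → H →L[ℂ] H)
    (P : Set (Set.Ico (0:ℝ) 1) → H →L[ℂ] H)
    (hproj : ∀ E : Set (Set.Ico (0:ℝ) 1), MeasurableSet E →
      adjoint (P E) = P E ∧ (P E) ∘L (P E) = P E)
    (hcov : ∀ E : Set (Set.Ico (0:ℝ) 1), MeasurableSet E →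
      ∑ j : Fin N, (S j) ∘L (P ((sigma01 hN0 j) ⁻¹' E)) ∘L (adjoint (S j)) = P E)
    (f : H) (lam : Fin N → ℂ)
    (heig : ∀ j : Fin N, adjoint (S j) f = lam j • f)
    (μ : Measure (Set.Ico (0:ℝ) 1))
    (hμ : ∀ E : Set (Set.Ico (0:ℝ) 1), MeasurableSet E →
      μ E = ENNReal.ofReal (‖P E f‖ ^ 2)) :
    μ = ∑ j : Fin N, ENNReal.ofReal (‖lam j‖ ^ 2) • Measure.map (sigma01 hN0 j) μ := by
  ext E hE
  have hpre : ∀ j, MeasurableSet (sigma01 hN0 j ⁻¹' E) := fun j => sigma01_measurable hN0 j hE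
  have hnorm := norm_sq_apply_eq_sum_of_eq_sum_conj (hproj E hE) (fun j => hproj _ (hpre j))
    (hcov E hE) heig
  rw [hμ E hE, hnorm, Measure.finsetSum_apply,
    ENNReal.ofReal_sum_of_nonneg fun j _ => by positivity]
  refine Finset.sum_congr rfl fun j _ => ?_
  rw [Measure.smul_apply, Measure.map_apply (sigma01_measurable hN0 j) hE, hμ _ (hpre j),
    smul_eq_mul, ← ENNReal.ofReal_mul (by positivity)]

theorem stmt8 {H : Type*} [NormedAddCommGroup H] [InnerProductSpace ℂ H] [CompleteSpace H]
    (N : ℕ) (hN : 2 ≤ N) (hN0 : 0 < N) (S : Fin N → H →L[ℂ] H)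
    (hiso : ∀ j k : Fin N, (adjoint (S j)) ∘L (S k) = if j = k then (1 : H →L[ℂ] H) else 0)
    (hsum : ∑ j : Fin N, (S j) ∘L (adjoint (S j)) = 1)
    (P : Set (Set.Ico (0:ℝ) 1) → H →L[ℂ] H)
    (hproj : ∀ E : Set (Set.Ico (0:ℝ) 1), MeasurableSet E →
      adjoint (P E) = P E ∧ (P E) ∘L (P E) = P E)
    (huniv : P Set.univ = 1)
    (hadd : ∀ (A : ℕ → Set (Set.Ico (0:ℝ) 1)), (∀ n, MeasurableSet (A n)) →
      Pairwise (Function.onFun Disjoint A) →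
      ∀ x : H, HasSum (fun n => P (A n) x) (P (⋃ n, A n) x))
    (hcov : ∀ E : Set (Set.Ico (0:ℝ) 1), MeasurableSet E →
      ∑ j : Fin N, (S j) ∘L (P ((sigma01 hN0 j) ⁻¹' E)) ∘L (adjoint (S j)) = P E)
    (f : H) (hf : ‖f‖ = 1) (lam : Fin N → ℂ)
    (heig : ∀ j : Fin N, adjoint (S j) f = lam j • f)
    (μ : Measure (Set.Ico (0:ℝ) 1)) [IsProbabilityMeasure μ]
    (hμ : ∀ E : Set (Set.Ico (0:ℝ) 1), MeasurableSet E →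
      μ E = ENNReal.ofReal (‖P E f‖ ^ 2)) :
    μ = ∑ j : Fin N, ENNReal.ofReal (‖lam j‖ ^ 2) • Measure.map (sigma01 hN0 j) μ :=
  stmt8_general N hN0 S P hproj hcov f lam heig μ hμ
end

section
/- Let N ≥ 2, (S_j) a representation of O_N on H, P a projection-valued Borel measure on [0,1) with the covariance property ∑_j S_j P(σ_j^{-1}(E)) S_j* = P(E) for σ_j(x) = (x+j)/N, and f ∈ H. Then the Fourier transform μ̂_f(t) = ∫_0^1 e^{itx} dμ_f(x) of μ_f(·) = ‖P(·)f‖² satisfies μ̂_f(t) = ∑_{k=0}^{N-1} e^{ikt/N} · μ̂_{S_k* f}(t/N) for all t ∈ ℝ. -/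
open ContinuousLinearMap MeasureTheory

/-
Covariance splits `P E f` into the pairwise orthogonal pieces `S j (P (σ_j⁻¹ E) (S j)† f)`
(orthogonal because `(S j)† S k = δ_jk`), so `μ_f = ∑ j, (σ_j)_* μ_{(S j)† f}`.
Integrating `e^{itx}` against `(σ_j)_* ν` gives `e^{ijt/N} ν̂(t/N)`, since `t σ_j(x) = jt/N + (t/N) x`.
-/

section OrthogonalIsometries

variable {𝕜 E ι : Type*} [RCLike 𝕜] [NormedAddCommGroup E] [InnerProductSpace 𝕜 E]
  [CompleteSpace E] [Fintype ι] [DecidableEq ι]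

theorem norm_sum_apply_sq_of_adjoint_comp_eq_ite (S : ι → E →L[𝕜] E)
    (hS : ∀ j k, adjoint (S j) ∘L S k = if j = k then 1 else 0) (v : ι → E) :
    ‖∑ j, S j (v j)‖ ^ 2 = ∑ j, ‖v j‖ ^ 2 := by
  have horth : ∀ j k,
      inner 𝕜 (S j (v j)) (S k (v k)) = if j = k then inner 𝕜 (v j) (v k) else 0 := by
    intro j k
    rw [← adjoint_inner_right, ← comp_apply, hS]
    split_ifs <;> simp
  have hinner : inner 𝕜 (∑ j, S j (v j)) (∑ j, S j (v j)) = ∑ j, inner 𝕜 (v j) (v j) := by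
    simp only [sum_inner, inner_sum, horth, Finset.sum_ite_eq', Finset.mem_univ, if_true]
  rw [← inner_self_eq_norm_sq (𝕜 := 𝕜), hinner, map_sum]
  simp only [inner_self_eq_norm_sq]

variable {X : Type*} [MeasurableSpace X]

theorem measure_eq_sum_map_of_covariant (S : ι → E →L[𝕜] E)
    (hS : ∀ j k, adjoint (S j) ∘L S k = if j = k then 1 else 0)
    (P : Set X → E →L[𝕜] E) (σ : ι → X → X) (hσ : ∀ j, Measurable (σ j))
    (hcov : ∀ A, MeasurableSet A → ∑ j, S j ∘L P (σ j ⁻¹' A) ∘L adjoint (S j) = P A)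
    (f : E) (μ : Measure X) (hμ : ∀ A, MeasurableSet A → μ A = ENNReal.ofReal (‖P A f‖ ^ 2))
    (ν : ι → Measure X)
    (hν : ∀ k A, MeasurableSet A → ν k A = ENNReal.ofReal (‖P A (adjoint (S k) f)‖ ^ 2)) :
    μ = ∑ j, (ν j).map (σ j) := by
  ext A hA
  have hsplit : P A f = ∑ j, S j (P (σ j ⁻¹' A) (adjoint (S j) f)) := by
    rw [← hcov A hA]
    simp only [sum_apply, comp_apply]
  rw [hμ A hA, hsplit, norm_sum_apply_sq_of_adjoint_comp_eq_ite S hS,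
    ENNReal.ofReal_sum_of_nonneg fun j _ => sq_nonneg _, Measure.coe_finsetSum, Finset.sum_apply]
  refine Finset.sum_congr rfl fun j _ => ?_
  rw [Measure.map_apply (hσ j) hA, hν j _ (hσ j hA)]

end OrthogonalIsometries

theorem continuous_sigma01 {N : ℕ} (hN : 0 < N) (j : Fin N) : Continuous (sigma01 hN j) :=
  ((continuous_subtype_val.add continuous_const).div_const _).subtype_mk _

theorem integrable_cexp_ofReal_mul_I {X : Type*} [TopologicalSpace X] [MeasurableSpace X]
    [OpensMeasurableSpace X] {g : X → ℝ} (hg : Continuous g) (μ : Measure X) [IsFiniteMeasure μ] :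
    Integrable (fun x => Complex.exp (g x * Complex.I)) μ :=
  Integrable.of_bound (by fun_prop : Continuous _).aestronglyMeasurable 1
    (ae_of_all _ fun x => (Complex.norm_exp_ofReal_mul_I (g x)).le)

theorem integral_cexp_map_sigma01 {N : ℕ} (hN : 0 < N) (j : Fin N)
    (ν : Measure (Set.Ico (0:ℝ) 1)) (t : ℝ) :
    ∫ x, Complex.exp ((t * (x : ℝ) : ℝ) * Complex.I) ∂(ν.map (sigma01 hN j)) =
      Complex.exp (((j : ℝ) * t / N : ℝ) * Complex.I) *
        ∫ x, Complex.exp (((t / N) * (x : ℝ) : ℝ) * Complex.I) ∂ν := by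
  rw [integral_map (continuous_sigma01 hN j).aemeasurable (by fun_prop), ← integral_const_mul]
  congr 1 with x
  rw [← Complex.exp_add]
  congr 1
  simp only [sigma01]
  push_cast
  ring

theorem stmt12_general {H : Type*} [NormedAddCommGroup H] [InnerProductSpace ℂ H] [CompleteSpace H]
    (N : ℕ) (hN0 : 0 < N) (S : Fin N → H →L[ℂ] H)
    (hiso : ∀ j k : Fin N, (adjoint (S j)) ∘L (S k) = if j = k then (1 : H →L[ℂ] H) else 0)
    (P : Set (Set.Ico (0:ℝ) 1) → H →L[ℂ] H)
    (hcov : ∀ E : Set (Set.Ico (0:ℝ) 1), MeasurableSet E →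
      ∑ j : Fin N, (S j) ∘L (P ((sigma01 hN0 j) ⁻¹' E)) ∘L (adjoint (S j)) = P E)
    (f : H)
    (μf : Measure (Set.Ico (0:ℝ) 1))
    (hμf : ∀ E : Set (Set.Ico (0:ℝ) 1), MeasurableSet E →
      μf E = ENNReal.ofReal (‖P E f‖ ^ 2))
    (μS : Fin N → Measure (Set.Ico (0:ℝ) 1)) [∀ k, IsFiniteMeasure (μS k)]
    (hμS : ∀ (k : Fin N) (E : Set (Set.Ico (0:ℝ) 1)), MeasurableSet E →
      μS k E = ENNReal.ofReal (‖P E (adjoint (S k) f)‖ ^ 2)) :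
    ∀ t : ℝ,
      (∫ x, Complex.exp ((t * (x : ℝ) : ℝ) * Complex.I) ∂μf) =
        ∑ k : Fin N,
          Complex.exp (((k : ℝ) * t / N : ℝ) * Complex.I) *
            ∫ x, Complex.exp (((t / N) * (x : ℝ) : ℝ) * Complex.I) ∂(μS k) := by
  intro t
  have hσ : ∀ j, Measurable (sigma01 hN0 j) := fun j => (continuous_sigma01 hN0 j).measurable
  rw [measure_eq_sum_map_of_covariant S hiso P _ hσ hcov f μf hμf μS hμS,
    integral_finsetSum_measure fun j _ =>
      integrable_cexp_ofReal_mul_I (by fun_prop) ((μS j).map (sigma01 hN0 j))]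
  exact Finset.sum_congr rfl fun j _ => integral_cexp_map_sigma01 hN0 j (μS j) t

theorem stmt12 {H : Type*} [NormedAddCommGroup H] [InnerProductSpace ℂ H] [CompleteSpace H]
    (N : ℕ) (hN : 2 ≤ N) (hN0 : 0 < N) (S : Fin N → H →L[ℂ] H)
    (hiso : ∀ j k : Fin N, (adjoint (S j)) ∘L (S k) = if j = k then (1 : H →L[ℂ] H) else 0)
    (hsum : ∑ j : Fin N, (S j) ∘L (adjoint (S j)) = 1)
    (P : Set (Set.Ico (0:ℝ) 1) → H →L[ℂ] H)
    (hproj : ∀ E : Set (Set.Ico (0:ℝ) 1), MeasurableSet E →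
      adjoint (P E) = P E ∧ (P E) ∘L (P E) = P E)
    (huniv : P Set.univ = 1)
    (hadd : ∀ (A : ℕ → Set (Set.Ico (0:ℝ) 1)), (∀ n, MeasurableSet (A n)) →
      Pairwise (Function.onFun Disjoint A) →
      ∀ x : H, HasSum (fun n => P (A n) x) (P (⋃ n, A n) x))
    (hcov : ∀ E : Set (Set.Ico (0:ℝ) 1), MeasurableSet E →
      ∑ j : Fin N, (S j) ∘L (P ((sigma01 hN0 j) ⁻¹' E)) ∘L (adjoint (S j)) = P E)
    (f : H)
    (μf : Measure (Set.Ico (0:ℝ) 1)) [IsFiniteMeasure μf]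
    (hμf : ∀ E : Set (Set.Ico (0:ℝ) 1), MeasurableSet E →
      μf E = ENNReal.ofReal (‖P E f‖ ^ 2))
    (μS : Fin N → Measure (Set.Ico (0:ℝ) 1)) [∀ k, IsFiniteMeasure (μS k)]
    (hμS : ∀ (k : Fin N) (E : Set (Set.Ico (0:ℝ) 1)), MeasurableSet E →
      μS k E = ENNReal.ofReal (‖P E (adjoint (S k) f)‖ ^ 2)) :
    ∀ t : ℝ,
      (∫ x, Complex.exp ((t * (x : ℝ) : ℝ) * Complex.I) ∂μf) =
        ∑ k : Fin N,
          Complex.exp (((k : ℝ) * t / N : ℝ) * Complex.I) *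
            ∫ x, Complex.exp (((t / N) * (x : ℝ) : ℝ) * Complex.I) ∂(μS k) :=
  stmt12_general N hN0 S hiso P hcov f μf hμf μS hμS
end

section
/- With the hypotheses of the preceding covariance setting (N ≥ 2, Cuntz representation (S_j), projection-valued measure P on [0,1) with ∑_j S_j P(σ_j^{-1}(E)) S_j* = P(E) for σ_j(x)=(x+j)/N, f a unit vector, μ_f(·) = ‖P(·)f‖²), for every k ∈ ℕ and t ∈ ℝ: |μ̂_f(t) − ∑_{α ∈ {0,…,N-1}^k} e^{it(α_1/N + ⋯ + α_k/N^k)} ‖S_{α_k}* ⋯ S_{α_1}* f‖²| ≤ |t| N^{−k}. -/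
/-!
Iterating the covariance relation `k` times gives `P(I_α) = S_α S_α*` for the `N`-adic interval
`I_α = [a_α, a_α + N⁻ᵏ)`, `a_α = ∑ α_i / N^(i+1)`, where `S_α = S_{α_0} ⋯ S_{α_(k-1)}`.
Each `S_α` is an isometry, so `μ_f(I_α) = ‖S_α* f‖²`. The intervals `I_α` partition `[0,1)`
and `x ↦ e^{itx}` stays within `|t| N⁻ᵏ` of `e^{i t a_α}` on `I_α`, so the sum is a Riemann sum
for `μ̂_f(t)` with error at most `|t| N⁻ᵏ`.
-/

open ContinuousLinearMap MeasureTheory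

noncomputable def nAdicPoint {N k : ℕ} (α : Fin k → Fin N) : ℝ :=
  ∑ i : Fin k, (α i : ℝ) / (N : ℝ) ^ ((i : ℕ) + 1)

def nAdicInterval {N k : ℕ} (α : Fin k → Fin N) : Set (Set.Ico (0:ℝ) 1) :=
  Subtype.val ⁻¹' Set.Ico (nAdicPoint α) (nAdicPoint α + ((N : ℝ) ^ k)⁻¹)

section NAdic

variable {N : ℕ}

lemma measurableSet_nAdicInterval {k : ℕ} (α : Fin k → Fin N) :
    MeasurableSet (nAdicInterval α) :=
  measurableSet_Ico.preimage measurable_subtype_coe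

lemma nAdicInterval_zero (α : Fin 0 → Fin N) : nAdicInterval α = Set.univ :=
  Set.eq_univ_of_forall fun x => by simp [nAdicInterval, nAdicPoint]

lemma nAdicPoint_succ {k : ℕ} (α : Fin (k + 1) → Fin N) :
    nAdicPoint α = (α 0 + nAdicPoint (Fin.tail α)) / N := by
  simp only [nAdicPoint, Fin.sum_univ_succ, Fin.val_zero, Fin.val_succ, Fin.tail, add_div,
    Finset.sum_div, pow_succ _ (_ + 1), div_div, zero_add, pow_one]

lemma nAdicPoint_nonneg {k : ℕ} (α : Fin k → Fin N) : 0 ≤ nAdicPoint α :=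
  Finset.sum_nonneg fun _ _ => by positivity

lemma nAdicPoint_add_le_one (hN : 0 < N) {k : ℕ} (α : Fin k → Fin N) :
    nAdicPoint α + ((N : ℝ) ^ k)⁻¹ ≤ 1 := by
  induction k with
  | zero => simp [nAdicPoint]
  | succ k ih =>
    have hN' : (0 : ℝ) < N := by exact_mod_cast hN
    have hα : (α 0 : ℝ) + 1 ≤ N := by exact_mod_cast (α 0).2
    rw [nAdicPoint_succ, pow_succ, mul_inv, ← div_eq_mul_inv, ← add_div, div_le_one hN']
    linarith [ih (Fin.tail α)]

@[simp]
lemma coe_sigma01 (hN : 0 < N) (j : Fin N) (y : Set.Ico (0:ℝ) 1) :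
    (sigma01 hN j y : ℝ) = (y + j) / N :=
  rfl

lemma sigma01_mem_nAdicInterval_iff (hN : 0 < N) (j : Fin N) (y : Set.Ico (0:ℝ) 1) {k : ℕ}
    (α : Fin (k + 1) → Fin N) :
    sigma01 hN j y ∈ nAdicInterval α ↔ α 0 = j ∧ y ∈ nAdicInterval (Fin.tail α) := by
  have hN' : (0 : ℝ) < N := by exact_mod_cast hN
  have hp := nAdicPoint_nonneg (Fin.tail α)
  have hp1 := nAdicPoint_add_le_one hN (Fin.tail α)
  obtain ⟨hy0, hy1⟩ := y.2
  have hscale : nAdicPoint α + ((N : ℝ) ^ (k + 1))⁻¹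
      = (α 0 + (nAdicPoint (Fin.tail α) + ((N : ℝ) ^ k)⁻¹)) / N := by
    rw [nAdicPoint_succ, pow_succ, mul_inv, ← div_eq_mul_inv, ← add_div, add_assoc]
  simp only [nAdicInterval, Set.mem_preimage, Set.mem_Ico]
  rw [coe_sigma01, hscale, nAdicPoint_succ, div_le_div_iff_of_pos_right hN',
    div_lt_div_iff_of_pos_right hN']
  constructor
  · rintro ⟨h1, h2⟩
    -- `y + j ∈ [j, j + 1)` and `α 0 + nAdicPoint (Fin.tail α) ∈ [α 0, α 0 + 1)`
    have hj : (α 0 : ℕ) = j := by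
      have h3 : (α 0 : ℝ) < j + 1 := by linarith
      have h4 : (j : ℝ) < α 0 + 1 := by linarith
      norm_cast at h3 h4
      omega
    rw [hj] at h1 h2
    exact ⟨Fin.ext hj, by linarith, by linarith⟩
  · rintro ⟨rfl, h1, h2⟩
    constructor <;> linarith

lemma preimage_sigma01_nAdicInterval (hN : 0 < N) (j : Fin N) {k : ℕ}
    (α : Fin (k + 1) → Fin N) :
    sigma01 hN j ⁻¹' nAdicInterval α = if α 0 = j then nAdicInterval (Fin.tail α) else ∅ := by
  ext y
  split_ifs with h <;> simp [sigma01_mem_nAdicInterval_iff, h]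

lemma exists_sigma01_eq (hN : 0 < N) (x : Set.Ico (0:ℝ) 1) :
    ∃ j y, sigma01 hN j y = x := by
  have hN' : (0 : ℝ) < N := by exact_mod_cast hN
  obtain ⟨hx0, hx1⟩ := x.2
  have hNx : 0 ≤ (N : ℝ) * x := by positivity
  have hj : ⌊(N : ℝ) * x⌋₊ < N := by
    rw [Nat.floor_lt hNx]; nlinarith
  refine ⟨⟨_, hj⟩, ⟨N * x - ⌊(N : ℝ) * x⌋₊, ?_, ?_⟩, Subtype.ext ?_⟩
  · linarith [Nat.floor_le hNx]
  · linarith [Nat.lt_floor_add_one ((N : ℝ) * x)]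
  · simp only [coe_sigma01]
    field_simp
    ring

lemma iUnion_nAdicInterval (hN : 0 < N) (k : ℕ) :
    ⋃ α : Fin k → Fin N, nAdicInterval α = Set.univ := by
  refine Set.eq_univ_of_forall fun x => Set.mem_iUnion.2 ?_
  induction k generalizing x with
  | zero => exact ⟨Fin.elim0, by simp [nAdicInterval_zero]⟩
  | succ k ih =>
    obtain ⟨j, y, rfl⟩ := exists_sigma01_eq hN x
    obtain ⟨β, hβ⟩ := ih y
    exact ⟨Fin.cons j β, (sigma01_mem_nAdicInterval_iff hN j y _).2 ⟨rfl, hβ⟩⟩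

lemma eq_of_mem_nAdicInterval (hN : 0 < N) {k : ℕ} {α β : Fin k → Fin N}
    {x : Set.Ico (0:ℝ) 1} (hα : x ∈ nAdicInterval α) (hβ : x ∈ nAdicInterval β) : α = β := by
  induction k generalizing x with
  | zero => exact Subsingleton.elim α β
  | succ k ih =>
    obtain ⟨j, y, rfl⟩ := exists_sigma01_eq hN x
    obtain ⟨hα0, hαy⟩ := (sigma01_mem_nAdicInterval_iff hN j y α).1 hα
    obtain ⟨hβ0, hβy⟩ := (sigma01_mem_nAdicInterval_iff hN j y β).1 hβ
    rw [← Fin.cons_self_tail α, ← Fin.cons_self_tail β, hα0, hβ0, ih hαy hβy]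

lemma pairwise_disjoint_nAdicInterval (hN : 0 < N) (k : ℕ) :
    Pairwise (Function.onFun Disjoint (nAdicInterval (N := N) (k := k))) :=
  fun _ _ hne => Set.disjoint_left.2 fun _ hα hβ => hne (eq_of_mem_nAdicInterval hN hα hβ)

end NAdic

def cuntzWord {R : Type*} [Monoid R] {N k : ℕ} (S : Fin N → R) (α : Fin k → Fin N) : R :=
  (List.ofFn fun i => S (α i)).prod

lemma cuntzWord_succ {R : Type*} [Monoid R] {N k : ℕ} (S : Fin N → R)
    (α : Fin (k + 1) → Fin N) : cuntzWord S α = S (α 0) * cuntzWord S (Fin.tail α) := by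
  simp [cuntzWord, List.ofFn_succ, Fin.tail]

section Operators

variable {E : Type*} [NormedAddCommGroup E] [NormedSpace ℂ E] {N : ℕ}

lemma norm_cuntzWord_apply {S : Fin N → E →L[ℂ] E} (hS : ∀ j v, ‖S j v‖ = ‖v‖) {k : ℕ}
    (α : Fin k → Fin N) (v : E) : ‖cuntzWord S α v‖ = ‖v‖ := by
  induction k with
  | zero => simp [cuntzWord]
  | succ k ih => rw [cuntzWord_succ, mul_apply_eq_comp, hS, ih]

variable {H : Type*} [NormedAddCommGroup H] [InnerProductSpace ℂ H] [CompleteSpace H]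

lemma foldl_ofFn_adjoint (S : Fin N → H →L[ℂ] H) {k : ℕ} (α : Fin k → Fin N) (v : H) :
    List.foldl (fun (w : H) (T : H →L[ℂ] H) => T w) v (List.ofFn fun i => adjoint (S (α i)))
      = adjoint (cuntzWord S α) v := by
  induction k generalizing v with
  | zero => simp [cuntzWord, ← star_eq_adjoint]
  | succ k ih =>
    rw [List.ofFn_succ, List.foldl_cons, cuntzWord_succ, mul_def, adjoint_comp]
    exact ih (Fin.tail α) _

lemma map_empty_eq_zero_of_hasSum {X : Type*} [MeasurableSpace X] (P : Set X → E →L[ℂ] E)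
    (hadd : ∀ (A : ℕ → Set X), (∀ n, MeasurableSet (A n)) →
      Pairwise (Function.onFun Disjoint A) → ∀ v, HasSum (fun n => P (A n) v) (P (⋃ n, A n) v)) :
    P ∅ = 0 := by
  refine ext fun v => (summable_const_iff (β := ℕ) (P ∅ v)).1 ?_
  simpa using (hadd (fun _ => ∅) (fun _ => .empty) (fun _ _ _ => Set.empty_disjoint _) v).summable

lemma apply_nAdicInterval_eq (hN : 0 < N) (S : Fin N → H →L[ℂ] H)
    (P : Set (Set.Ico (0:ℝ) 1) → H →L[ℂ] H) (hempty : P ∅ = 0) (huniv : P Set.univ = 1)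
    (hcov : ∀ E : Set (Set.Ico (0:ℝ) 1), MeasurableSet E →
      ∑ j : Fin N, (S j) ∘L (P ((sigma01 hN j) ⁻¹' E)) ∘L (adjoint (S j)) = P E)
    {k : ℕ} (α : Fin k → Fin N) :
    P (nAdicInterval α) = cuntzWord S α ∘L adjoint (cuntzWord S α) := by
  induction k with
  | zero => simp [nAdicInterval_zero, huniv, cuntzWord, ← star_eq_adjoint, ← mul_def]
  | succ k ih =>
    rw [← hcov _ (measurableSet_nAdicInterval α), Finset.sum_eq_single (α 0)]
    · rw [preimage_sigma01_nAdicInterval, if_pos rfl, ih, cuntzWord_succ, mul_def, adjoint_comp]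
      rfl
    · intro j _ hj
      rw [preimage_sigma01_nAdicInterval, if_neg (Ne.symm hj), hempty, zero_comp, comp_zero]
    · simp

end Operators

lemma norm_integral_sub_sum_le_of_partition {X ι F : Type*} [MeasurableSpace X] [Fintype ι]
    [NormedAddCommGroup F] [NormedSpace ℝ F] [CompleteSpace F]
    (μ : Measure X) [IsFiniteMeasure μ] {I : ι → Set X} (hI : ∀ i, MeasurableSet (I i))
    (hdisj : Pairwise (Function.onFun Disjoint I)) (hcover : ⋃ i, I i = Set.univ)
    {φ : X → F} (hφ : Integrable φ μ) (c : ι → F) {ε : ℝ}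
    (hε : ∀ i, ∀ x ∈ I i, ‖φ x - c i‖ ≤ ε) :
    ‖∫ x, φ x ∂μ - ∑ i, μ.real (I i) • c i‖ ≤ ε * μ.real Set.univ := by
  have hsplit : ∫ x, φ x ∂μ - ∑ i, μ.real (I i) • c i = ∑ i, ∫ x in I i, (φ x - c i) ∂μ := by
    rw [← setIntegral_univ, ← hcover, integral_iUnion_fintype hI hdisj fun i => hφ.integrableOn,
      ← Finset.sum_sub_distrib]
    refine Finset.sum_congr rfl fun i _ => ?_
    rw [integral_sub hφ.integrableOn (integrableOn_const (measure_ne_top μ _)), setIntegral_const]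
  calc ‖∫ x, φ x ∂μ - ∑ i, μ.real (I i) • c i‖
      = ‖∑ i, ∫ x in I i, (φ x - c i) ∂μ‖ := by rw [hsplit]
    _ ≤ ∑ i, ε * μ.real (I i) := norm_sum_le_of_le _ fun i _ =>
      norm_setIntegral_le_of_norm_le_const (measure_lt_top μ _) (hε i)
    _ = ε * μ.real Set.univ := by
      rw [← Finset.mul_sum, ← measureReal_iUnion_fintype hdisj hI, hcover]

lemma norm_exp_mul_I_sub_exp_mul_I_le (a b : ℝ) :
    ‖Complex.exp (a * Complex.I) - Complex.exp (b * Complex.I)‖ ≤ |a - b| :=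
  calc ‖Complex.exp (a * Complex.I) - Complex.exp (b * Complex.I)‖
      = ‖Complex.exp (b * Complex.I) * (Complex.exp (Complex.I * (a - b : ℝ)) - 1)‖ := by
        rw [mul_sub, mul_one, ← Complex.exp_add]; push_cast; ring_nf
    _ ≤ |a - b| := by
      rw [norm_mul, Complex.norm_exp_ofReal_mul_I, one_mul]
      exact Real.norm_exp_I_mul_ofReal_sub_one_le

lemma abs_sub_nAdicPoint_le {N k : ℕ} {α : Fin k → Fin N} {x : Set.Ico (0:ℝ) 1}
    (hx : x ∈ nAdicInterval α) : |(x : ℝ) - nAdicPoint α| ≤ ((N : ℝ) ^ k)⁻¹ := by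
  obtain ⟨h1, h2⟩ := hx
  have : 0 ≤ ((N : ℝ) ^ k)⁻¹ := by positivity
  exact abs_le.2 ⟨by linarith, by linarith⟩

theorem stmt13_general {H : Type*} [NormedAddCommGroup H] [InnerProductSpace ℂ H] [CompleteSpace H]
    (N : ℕ) (hN0 : 0 < N) (S : Fin N → H →L[ℂ] H)
    (hiso : ∀ j k : Fin N, (adjoint (S j)) ∘L (S k) = if j = k then (1 : H →L[ℂ] H) else 0)
    (P : Set (Set.Ico (0:ℝ) 1) → H →L[ℂ] H)
    (huniv : P Set.univ = 1)
    (hadd : ∀ (A : ℕ → Set (Set.Ico (0:ℝ) 1)), (∀ n, MeasurableSet (A n)) →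
      Pairwise (Function.onFun Disjoint A) →
      ∀ x : H, HasSum (fun n => P (A n) x) (P (⋃ n, A n) x))
    (hcov : ∀ E : Set (Set.Ico (0:ℝ) 1), MeasurableSet E →
      ∑ j : Fin N, (S j) ∘L (P ((sigma01 hN0 j) ⁻¹' E)) ∘L (adjoint (S j)) = P E)
    (f : H)
    (μf : Measure (Set.Ico (0:ℝ) 1)) [IsProbabilityMeasure μf]
    (hμf : ∀ E : Set (Set.Ico (0:ℝ) 1), MeasurableSet E →
      μf E = ENNReal.ofReal (‖P E f‖ ^ 2)) :
    ∀ (k : ℕ) (t : ℝ),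
      ‖(∫ x, Complex.exp ((t * (x : ℝ) : ℝ) * Complex.I) ∂μf) -
          ∑ α : Fin k → Fin N,
            Complex.exp
                ((t * ∑ i : Fin k, (α i : ℝ) / (N : ℝ) ^ ((i : ℕ) + 1) : ℝ) * Complex.I) *
              (‖List.foldl (fun (v : H) (T : H →L[ℂ] H) => T v) f
                  (List.ofFn fun i => adjoint (S (α i)))‖ ^ 2 : ℝ)‖ ≤
        |t| / (N : ℝ) ^ k := by
  intro k t
  have hisom : ∀ j v, ‖S j v‖ = ‖v‖ := fun j =>
    (norm_map_iff_adjoint_comp_self (S j)).2 (by simpa using hiso j j)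
  have hμ (α : Fin k → Fin N) : μf.real (nAdicInterval α) = ‖adjoint (cuntzWord S α) f‖ ^ 2 := by
    rw [measureReal_def, hμf _ (measurableSet_nAdicInterval α),
      ENNReal.toReal_ofReal (by positivity),
      apply_nAdicInterval_eq hN0 S P (map_empty_eq_zero_of_hasSum P hadd) huniv hcov, comp_apply,
      norm_cuntzWord_apply hisom]
  have hφ : Integrable
      (fun x : Set.Ico (0:ℝ) 1 => Complex.exp ((t * (x : ℝ) : ℝ) * Complex.I)) μf :=
    Integrable.of_bound (by fun_prop) 1 (ae_of_all _ fun x => (Complex.norm_exp_ofReal_mul_I _).le)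
  have hbound := norm_integral_sub_sum_le_of_partition μf measurableSet_nAdicInterval
    (pairwise_disjoint_nAdicInterval hN0 k) (iUnion_nAdicInterval hN0 k) hφ
    (fun α => Complex.exp ((t * nAdicPoint α : ℝ) * Complex.I)) (ε := |t| / N ^ k)
    fun α x hx => (norm_exp_mul_I_sub_exp_mul_I_le _ _).trans <| by
      rw [← mul_sub, abs_mul, div_eq_mul_inv]
      exact mul_le_mul_of_nonneg_left (abs_sub_nAdicPoint_le hx) (abs_nonneg t)
  rw [probReal_univ, mul_one] at hbound
  refine le_of_eq_of_le (congrArg (‖·‖) (congrArg _ (Finset.sum_congr rfl fun α _ => ?_))) hbound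
  rw [foldl_ofFn_adjoint, ← hμ, Complex.real_smul, mul_comm]
  rfl

theorem stmt13 {H : Type*} [NormedAddCommGroup H] [InnerProductSpace ℂ H] [CompleteSpace H]
    (N : ℕ) (hN : 2 ≤ N) (hN0 : 0 < N) (S : Fin N → H →L[ℂ] H)
    (hiso : ∀ j k : Fin N, (adjoint (S j)) ∘L (S k) = if j = k then (1 : H →L[ℂ] H) else 0)
    (hsum : ∑ j : Fin N, (S j) ∘L (adjoint (S j)) = 1)
    (P : Set (Set.Ico (0:ℝ) 1) → H →L[ℂ] H)
    (hproj : ∀ E : Set (Set.Ico (0:ℝ) 1), MeasurableSet E →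
      adjoint (P E) = P E ∧ (P E) ∘L (P E) = P E)
    (huniv : P Set.univ = 1)
    (hadd : ∀ (A : ℕ → Set (Set.Ico (0:ℝ) 1)), (∀ n, MeasurableSet (A n)) →
      Pairwise (Function.onFun Disjoint A) →
      ∀ x : H, HasSum (fun n => P (A n) x) (P (⋃ n, A n) x))
    (hcov : ∀ E : Set (Set.Ico (0:ℝ) 1), MeasurableSet E →
      ∑ j : Fin N, (S j) ∘L (P ((sigma01 hN0 j) ⁻¹' E)) ∘L (adjoint (S j)) = P E)
    (f : H) (hf : ‖f‖ = 1)
    (μf : Measure (Set.Ico (0:ℝ) 1)) [IsProbabilityMeasure μf]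
    (hμf : ∀ E : Set (Set.Ico (0:ℝ) 1), MeasurableSet E →
      μf E = ENNReal.ofReal (‖P E f‖ ^ 2)) :
    ∀ (k : ℕ) (t : ℝ),
      ‖(∫ x, Complex.exp ((t * (x : ℝ) : ℝ) * Complex.I) ∂μf) -
          ∑ α : Fin k → Fin N,
            Complex.exp
                ((t * ∑ i : Fin k, (α i : ℝ) / (N : ℝ) ^ ((i : ℕ) + 1) : ℝ) * Complex.I) *
              (‖List.foldl (fun (v : H) (T : H →L[ℂ] H) => T v) f
                  (List.ofFn fun i => adjoint (S (α i)))‖ ^ 2 : ℝ)‖ ≤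
        |t| / (N : ℝ) ^ k :=
  stmt13_general N hN0 S hiso P huniv hadd hcov f μf hμf
end
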